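/- Fix φ : ℝ → ℝ smooth, odd, supported in (−1,1), with ∫_ℝ φ² = 1, and for λ a power of 2 and 0 < ε < 1 with λ^ε ∈ ℤ define the intermittent slab ρ_{λ,ε}(x) = ∑_{n∈ℤ} λ^{(1−ε)/2} φ(λx + λ^{1−ε}n) on 𝕋. Then for every s ≥ 0 there is a constant C(s,φ), independent of λ and ε, such that ‖P_{≠0}(ρ_{λ,ε}²)‖_{Ḣ^{−s}(𝕋)} ≤ C(s,φ) λ^{−sε} λ^{(1−ε)/2}, where P_{≠0}g = g − ∫_𝕋 g. -/

import Mathlib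

open MeasureTheory

/-- Fourier coefficient on `𝕋 = ℝ/ℤ`: `f̂(k) = ∫_0^1 f(x) e^{-2πikx} dx`. -/
noncomputable def fourierCoefT (f : ℝ → ℂ) (k : ℤ) : ℂ :=
  ∫ x in (0:ℝ)..1, f x * Complex.exp (-(2 * Real.pi * Complex.I) * k * x)

/-- Homogeneous negative Sobolev norm `‖f‖_{Ḣ^{-s}} = (∑_{k≠0} |k|^{-2s}|f̂(k)|²)^{1/2}`. -/
noncomputable def negSobolevNorm (s : ℝ) (f : ℝ → ℝ) : ℝ :=
  Real.sqrt (∑' k : ℤ, if k = 0 then 0 else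
    |(k : ℝ)| ^ (-(2 * s)) * ‖fourierCoefT (fun x => ((f x : ℝ) : ℂ)) k‖ ^ 2)

/-- The intermittent slab `ρ_{λ,ε}(x) = ∑_{n ∈ ℤ} λ^{(1-ε)/2} φ(λx + λ^{1-ε} n)`. -/
noncomputable def slab (φ : ℝ → ℝ) (lam ε : ℝ) (x : ℝ) : ℝ :=
  ∑' n : ℤ, lam ^ ((1 - ε) / 2) * φ (lam * x + lam ^ (1 - ε) * n)

namespace SlabAux

noncomputable def expk (k : ℤ) (x : ℝ) : ℂ := Complex.exp (-(2 * Real.pi * Complex.I) * k * x)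

lemma continuous_expk (k : ℤ) : Continuous (expk k) := by
  unfold expk; fun_prop

lemma fourierCoefT_eq (f : ℝ → ℂ) (k : ℤ) :
    fourierCoefT f k = ∫ x in (0:ℝ)..1, f x * expk k x := rfl

lemma neg_two_pi_I_k_ne_zero {k : ℤ} (hk : k ≠ 0) :
    (-(2 * (Real.pi:ℂ) * Complex.I) * k : ℂ) ≠ 0 := by
  have h1 : ((k:ℂ)) ≠ 0 := Int.cast_ne_zero.mpr hk
  have h2 : (Real.pi:ℂ) ≠ 0 := by exact_mod_cast Real.pi_ne_zero
  simp [Complex.I_ne_zero, h1, h2]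

lemma integral_expk_eq_zero {k : ℤ} (hk : k ≠ 0) : ∫ x in (0:ℝ)..1, expk k x = 0 := by
  have hc := neg_two_pi_I_k_ne_zero hk
  have h := integral_exp_mul_complex (a := (0:ℝ)) (b := 1)
    (c := -(2 * (Real.pi:ℂ) * Complex.I) * k) hc
  have h1 : (-(2 * (Real.pi:ℂ) * Complex.I) * k) * (1:ℝ) = ((-k : ℤ):ℂ) * (2 * Real.pi * Complex.I) := by
    push_cast; ring
  have h2 : (-(2 * (Real.pi:ℂ) * Complex.I) * k) * (0:ℝ) = 0 := by
    push_cast; ring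
  unfold expk
  rw [show (fun x : ℝ => Complex.exp (-(2 * (Real.pi:ℂ) * Complex.I) * k * x)) =
    (fun x : ℝ => Complex.exp ((-(2 * (Real.pi:ℂ) * Complex.I) * k) * x)) from rfl]
  rw [h, h1, h2, Complex.exp_int_mul_two_pi_mul_I, Complex.exp_zero]
  simp

lemma expk_add (k : ℤ) (x d : ℝ) : expk k (x + d) = expk k x * expk k d := by
  unfold expk
  rw [← Complex.exp_add]
  congr 1
  push_cast
  ring

/-- Vanishing of Fourier coefficients off the lattice, for a `1/M`-periodic function. -/
lemma fourierCoefT_eq_zero_of_periodic {g : ℝ → ℂ} (hg : Continuous g) {M : ℕ} (hM : 0 < M)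
    (hper : Function.Periodic g (1 / (M:ℝ))) {k : ℤ} (hk : ¬ ((M:ℤ) ∣ k)) :
    fourierCoefT g k = 0 := by
  have hMR : (0:ℝ) < (M:ℝ) := by exact_mod_cast hM
  set a : ℕ → ℝ := fun j => (j:ℝ) / M with ha
  have hint : ∀ (u v : ℝ), IntervalIntegrable (fun x => g x * expk k x) volume u v :=
    fun u v => (hg.mul (continuous_expk k)).intervalIntegrable u v
  have hsplit : ∑ j ∈ Finset.range M, ∫ x in a j..a (j+1), g x * expk k x
      = ∫ x in (a 0)..(a M), g x * expk k x :=
    intervalIntegral.sum_integral_adjacent_intervals (fun j _ => hint _ _)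
  have ha0 : a 0 = 0 := by simp [ha]
  have haM : a M = 1 := by simp only [ha]; exact div_self hMR.ne'
  have hpiece : ∀ j : ℕ, ∫ x in a j..a (j+1), g x * expk k x
      = expk k ((j:ℝ)/M) * ∫ x in (0:ℝ)..1/M, g x * expk k x := by
    intro j
    have hshift := intervalIntegral.integral_comp_add_right (a := (0:ℝ)) (b := 1/M)
      (fun x => g x * expk k x) ((j:ℝ)/M)
    have hb : a j = 0 + (j:ℝ)/M := by simp [ha]
    have hb2 : a (j+1) = 1/M + (j:ℝ)/M := by
      simp only [ha]; push_cast; field_simp; ring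
    rw [hb, hb2, ← hshift]
    rw [← intervalIntegral.integral_const_mul]
    apply intervalIntegral.integral_congr
    intro x _
    show g (x + (j:ℝ)/M) * expk k (x + (j:ℝ)/M) = expk k ((j:ℝ)/M) * (g x * expk k x)
    have : g (x + (j:ℝ)/M) = g x := by
      have h2 := (hper.nat_mul j) x
      have : (j:ℝ) * (1/M) = (j:ℝ)/M := by ring
      rw [this] at h2
      exact h2
    rw [expk_add, this]
    ring
  set ω : ℂ := expk k (1/M) with hω
  have hωj : ∀ j : ℕ, expk k ((j:ℝ)/M) = ω ^ j := by
    intro j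
    rw [hω]
    unfold expk
    rw [← Complex.exp_nat_mul]
    congr 1
    push_cast
    ring
  have hωM : ω ^ M = 1 := by
    rw [← hωj M]
    unfold expk
    have : -(2 * (Real.pi:ℂ) * Complex.I) * k * ((M:ℝ)/M : ℝ) = ((-k : ℤ):ℂ) * (2 * Real.pi * Complex.I) := by
      have : ((M:ℝ)/M : ℝ) = 1 := by field_simp
      rw [this]; push_cast; ring
    rw [this, Complex.exp_int_mul_two_pi_mul_I]
  have hωne : ω ≠ 1 := by
    intro hcon
    rw [hω] at hcon
    unfold expk at hcon
    rw [Complex.exp_eq_one_iff] at hcon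
    obtain ⟨n, hn⟩ := hcon
    apply hk
    have hM' : ((M:ℂ)) ≠ 0 := by exact_mod_cast hMR.ne'
    have htpi : (2 * (Real.pi:ℂ) * Complex.I) ≠ 0 := by
      have h2 : (Real.pi:ℂ) ≠ 0 := by exact_mod_cast Real.pi_ne_zero
      simp [Complex.I_ne_zero, h2]
    have : ((k:ℂ)) = ((-n * M : ℤ):ℂ) := by
      push_cast
      have hcast : ((1/(M:ℝ) : ℝ) : ℂ) = 1 / (M:ℂ) := by push_cast; ring
      rw [hcast] at hn
      field_simp at hn
      have := hn
      -- hn : -(2 * π * I * k) = n * (2 * π * I) * M (roughly); solve for k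
      have h3 : (k:ℂ) = -(n * M) := by
        apply mul_left_cancel₀ htpi
        linear_combination (-(2 * (Real.pi:ℂ) * Complex.I)) * hn
      rw [h3]; ring
    have : k = -n * M := by exact_mod_cast this
    exact Dvd.intro_left (-n) this.symm
  have hgeom : ∑ j ∈ Finset.range M, ω ^ j = (ω ^ M - 1) / (ω - 1) := geom_sum_eq hωne M
  rw [fourierCoefT_eq, ← ha0, ← haM, ← hsplit]
  calc ∑ j ∈ Finset.range M, ∫ x in a j..a (j+1), g x * expk k x
      = ∑ j ∈ Finset.range M, expk k ((j:ℝ)/M) * ∫ x in (0:ℝ)..1/M, g x * expk k x := by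
        exact Finset.sum_congr rfl (fun j _ => hpiece j)
    _ = (∑ j ∈ Finset.range M, ω ^ j) * ∫ x in (0:ℝ)..1/M, g x * expk k x := by
        rw [Finset.sum_mul]
        exact Finset.sum_congr rfl (fun j _ => by rw [hωj j])
    _ = 0 := by
        rw [hgeom, hωM]
        simp

end SlabAux

open scoped Real
open AddCircle

instance slabAuxFactZeroLtOneReal : Fact ((0:ℝ) < 1) := ⟨one_pos⟩

/-- Bessel/Parseval for a continuous 1-periodic function. -/
lemma parseval_tsum {g : ℝ → ℂ} (hg : Continuous g) (hper : Function.Periodic g 1) :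
    Summable (fun k : ℤ => ‖fourierCoefT g k‖ ^ 2) ∧
    ∑' k : ℤ, ‖fourierCoefT g k‖ ^ 2 = ∫ x in (0:ℝ)..1, ‖g x‖ ^ 2 := by
  set G : C(AddCircle (1:ℝ), ℂ) := ⟨hper.lift, continuous_coinduced_dom.mpr (by exact hg)⟩ with hG
  have hGcoe : ∀ x : ℝ, G (x : AddCircle (1:ℝ)) = g x := fun x => hper.lift_coe x
  have hcoeff : ∀ k : ℤ, fourierCoeff (G : AddCircle (1:ℝ) → ℂ) k = fourierCoefT g k := by
    intro k
    rw [fourierCoeff_eq_intervalIntegral (G : AddCircle (1:ℝ) → ℂ) k 0]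
    rw [fourierCoefT]
    norm_num
    apply intervalIntegral.integral_congr
    intro x _
    show (starRingEnd ℂ) (Complex.exp (2 * (π:ℂ) * Complex.I * (k:ℂ) * (x:ℂ))) * G ↑x
        = g x * Complex.exp (-(2 * (π:ℂ) * Complex.I * (k:ℂ) * (x:ℂ)))
    have hconj : (starRingEnd ℂ) (Complex.exp (2 * (π:ℂ) * Complex.I * (k:ℂ) * (x:ℂ)))
        = Complex.exp (-(2 * (π:ℂ) * Complex.I * (k:ℂ) * (x:ℂ))) := by
      rw [← Complex.exp_conj]
      congr 1
      simp only [map_mul, Complex.conj_I, Complex.conj_ofReal, map_intCast, map_ofNat]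
      ring
    rw [hconj, hGcoe x, mul_comm]
  set fL := ContinuousMap.toLp (E := ℂ) 2 haarAddCircle ℂ G with hfL
  have hcoeff2 : ∀ k : ℤ, fourierCoeff (fL : AddCircle (1:ℝ) → ℂ) k = fourierCoefT g k := by
    intro k; rw [fourierCoeff_toLp, hcoeff]
  have hpars := tsum_sq_fourierCoeff fL
  have hrhs : ∫ t : AddCircle (1:ℝ), ‖fL t‖ ^ 2 ∂haarAddCircle = ∫ x in (0:ℝ)..1, ‖g x‖ ^ 2 := by
    have h1 : ∫ t : AddCircle (1:ℝ), ‖fL t‖ ^ 2 ∂haarAddCircle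
        = ∫ t : AddCircle (1:ℝ), ‖G t‖ ^ 2 ∂haarAddCircle := by
      apply integral_congr_ae
      filter_upwards [ContinuousMap.coeFn_toLp (p := 2) (μ := haarAddCircle) (𝕜 := ℂ) G] with t ht
      rw [ht]
    have hvol : (volume : Measure (AddCircle (1:ℝ))) = haarAddCircle := by
      rw [AddCircle.volume_eq_smul_haarAddCircle]
      simp
    have h2 := AddCircle.intervalIntegral_preimage 1 0 (fun t : AddCircle (1:ℝ) => ‖G t‖ ^ 2)
    rw [hvol] at h2
    rw [h1, ← h2]
    norm_num
    apply intervalIntegral.integral_congr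
    intro x _
    show ‖G ↑x‖ ^ 2 = ‖g x‖ ^ 2
    rw [hGcoe x]
  -- summability
  have hsumm : Summable (fun k : ℤ => ‖fourierCoefT g k‖ ^ 2) := by
    have h0 := (@orthonormal_fourier 1 _).inner_products_summable (x := fL)
    have heq : ∀ k : ℤ, ‖@inner ℂ _ _ (fourierLp 2 k) fL‖ ^ 2 = ‖fourierCoefT g k‖ ^ 2 := by
      intro k
      congr 2
      rw [← coe_fourierBasis]
      rw [← fourierBasis.repr_apply_apply fL k, fourierBasis_repr fL k]
      exact hcoeff2 k
    exact h0.congr heq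
  refine ⟨hsumm, ?_⟩
  rw [← hrhs, ← hpars]
  congr 1
  funext k
  rw [hcoeff2 k]

section Slab
variable {φ : ℝ → ℝ}

lemma active_bounds (hsupp : Function.support φ ⊆ Set.Ioo (-1:ℝ) 1) {L aa : ℝ} (hL : 0 < L)
    {n : ℤ} (h : φ (aa + L * n) ≠ 0) : (-1 - aa)/L < (n:ℝ) ∧ (n:ℝ) < (1 - aa)/L := by
  have h2 := hsupp (Function.mem_support.mpr h)
  simp only [Set.mem_Ioo] at h2
  constructor
  · rw [div_lt_iff₀ hL]; nlinarith [h2.1]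
  · rw [lt_div_iff₀ hL]; nlinarith [h2.2]

lemma slab_eq_sum {lam ε : ℝ} (x : ℝ) (F : Finset ℤ)
    (hF : ∀ n : ℤ, φ (lam * x + lam ^ (1-ε) * n) ≠ 0 → n ∈ F) :
    slab φ lam ε x = ∑ n ∈ F, lam ^ ((1-ε)/2) * φ (lam * x + lam ^ (1-ε) * n) := by
  rw [slab]
  apply tsum_eq_sum
  intro n hn
  rcases em (φ (lam * x + lam ^ (1-ε) * n) = 0) with h | h
  · rw [h, mul_zero]
  · exact absurd (hF n h) hn

lemma slab_summable {lam ε : ℝ} (hsupp : Function.support φ ⊆ Set.Ioo (-1:ℝ) 1)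
    (hlam : 1 ≤ lam) (x : ℝ) :
    Summable (fun n : ℤ => lam ^ ((1-ε)/2) * φ (lam * x + lam ^ (1-ε) * n)) := by
  have hlam0 : (0:ℝ) < lam := lt_of_lt_of_le one_pos hlam
  have hL0 : (0:ℝ) < lam ^ (1-ε) := Real.rpow_pos_of_pos hlam0 _
  apply summable_of_ne_finset_zero (s := Finset.Icc ⌊(-1 - lam*x)/lam ^ (1-ε)⌋
      ⌈(1 - lam*x)/lam ^ (1-ε)⌉)
  intro n hn
  rcases em (φ (lam * x + lam ^ (1-ε) * n) = 0) with h | h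
  · rw [h, mul_zero]
  · exfalso
    obtain ⟨h1, h2⟩ := active_bounds hsupp hL0 h
    apply hn
    rw [Finset.mem_Icc]
    constructor
    · exact_mod_cast (lt_of_le_of_lt (Int.floor_le _) h1).le
    · exact_mod_cast (lt_of_lt_of_le h2 (Int.le_ceil _)).le

lemma slab_continuous (hφc : Continuous φ) (hsupp : Function.support φ ⊆ Set.Ioo (-1:ℝ) 1)
    {lam ε : ℝ} (hlam : 1 ≤ lam) : Continuous (slab φ lam ε) := by
  have hlam0 : (0:ℝ) < lam := lt_of_lt_of_le one_pos hlam
  set L := lam ^ (1-ε) with hLdef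
  have hL0 : 0 < L := Real.rpow_pos_of_pos hlam0 _
  rw [continuous_iff_continuousAt]
  intro x₀
  set A : ℤ := ⌊(-2 - lam * x₀)/L⌋ with hA
  set B : ℤ := ⌈(2 - lam * x₀)/L⌉ with hB
  have key : ∀ x ∈ Metric.ball x₀ (1/lam),
      slab φ lam ε x = ∑ n ∈ Finset.Icc A B, lam ^ ((1-ε)/2) * φ (lam * x + L * n) := by
    intro x hx
    rw [Metric.mem_ball, Real.dist_eq, abs_lt] at hx
    have hxl1 : lam * x ≤ lam * x₀ + 1 := by
      have h := hx.2
      have : lam * (x - x₀) < lam * (1/lam) := by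
        apply mul_lt_mul_of_pos_left h hlam0
      rw [mul_one_div, div_self hlam0.ne'] at this
      nlinarith
    have hxl2 : lam * x₀ - 1 ≤ lam * x := by
      have h := hx.1
      have : lam * (-(1/lam)) < lam * (x - x₀) :=
        mul_lt_mul_of_pos_left h hlam0
      rw [mul_neg, mul_one_div, div_self hlam0.ne'] at this
      nlinarith
    apply slab_eq_sum
    intro n hn
    obtain ⟨h1, h2⟩ := active_bounds hsupp hL0 hn
    rw [Finset.mem_Icc]
    constructor
    · have hA2 : (A:ℝ) ≤ (-2 - lam*x₀)/L := Int.floor_le _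
      have h3 : (-2 - lam*x₀)/L ≤ (-1 - lam*x)/L :=
        (div_le_div_iff_of_pos_right hL0).mpr (by linarith)
      have : (A:ℝ) < n := lt_of_le_of_lt (le_trans hA2 h3) h1
      exact_mod_cast this.le
    · have hB2 : (2 - lam*x₀)/L ≥ (B:ℝ) - 1 := by
        have := Int.ceil_lt_add_one ((2 - lam*x₀)/L)
        linarith
      have h3 : (1 - lam*x)/L ≤ (2 - lam*x₀)/L :=
        (div_le_div_iff_of_pos_right hL0).mpr (by linarith)
      have hB3 : (2 - lam*x₀)/L ≤ (B:ℝ) := Int.le_ceil _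
      have : (n:ℝ) < (B:ℝ) + 1 := by linarith [lt_of_lt_of_le h2 (h3.trans hB3)]
      have : n < B + 1 := by exact_mod_cast this
      omega
  have hcont : ContinuousAt
      (fun x => ∑ n ∈ Finset.Icc A B, lam ^ ((1-ε)/2) * φ (lam * x + L * n)) x₀ := by
    apply Continuous.continuousAt
    apply continuous_finset_sum
    intro n _
    exact continuous_const.mul (hφc.comp (by fun_prop))
  apply hcont.congr
  apply Filter.eventuallyEq_of_mem (Metric.ball_mem_nhds (ε := 1/lam) x₀ (by positivity))
  intro x hx
  exact (key x hx).symm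

lemma slab_periodic {lam ε : ℝ} (hlam0 : lam ≠ 0) :
    Function.Periodic (slab φ lam ε) (lam ^ (1-ε) / lam) := by
  intro x
  unfold slab
  have harg : ∀ n : ℤ, lam * (x + lam ^ (1-ε)/lam) + lam ^ (1-ε) * (n:ℝ)
      = lam * x + lam ^ (1-ε) * (((n+1) : ℤ):ℝ) := by
    intro n; push_cast; field_simp; ring
  calc ∑' n : ℤ, lam ^ ((1-ε)/2) * φ (lam * (x + lam ^ (1-ε)/lam) + lam ^ (1-ε) * n)
      = ∑' n : ℤ, lam ^ ((1-ε)/2) * φ (lam * x + lam ^ (1-ε) * (((n+1) : ℤ):ℝ)) := by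
        congr 1; funext n; rw [harg n]
    _ = ∑' n : ℤ, lam ^ ((1-ε)/2) * φ (lam * x + lam ^ (1-ε) * (n:ℝ)) :=
        ((Equiv.addRight (1:ℤ)).tsum_eq
          (fun n : ℤ => lam ^ ((1-ε)/2) * φ (lam * x + lam ^ (1-ε) * (n:ℝ))))

end Slab


namespace SlabAux
section Slab2
variable {φ : ℝ → ℝ}

lemma two_term (hsupp : Function.support φ ⊆ Set.Ioo (-1:ℝ) 1)
    {lam ε : ℝ} (hlam : 1 ≤ lam) (hε1 : ε ≤ 1) (x : ℝ) :
    ∀ n : ℤ, φ (lam * x + lam ^ (1-ε) * n) ≠ 0 →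
      n ∈ ({⌊(-1 - lam*x)/lam ^ (1-ε)⌋ + 1, ⌊(-1 - lam*x)/lam ^ (1-ε)⌋ + 2} : Finset ℤ) := by
  intro n hn
  have hlam0 : (0:ℝ) < lam := lt_of_lt_of_le one_pos hlam
  set L := lam ^ (1-ε) with hL
  have hL0 : 0 < L := Real.rpow_pos_of_pos hlam0 _
  have hL1 : 1 ≤ L := by
    have h := Real.rpow_le_rpow_of_exponent_le hlam (show (0:ℝ) ≤ 1-ε by linarith)
    rwa [Real.rpow_zero] at h
  obtain ⟨h1, h2⟩ := active_bounds hsupp hL0 hn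
  set v := (-1 - lam*x)/L with hv
  have hupper : (1 - lam*x)/L ≤ v + 2 := by
    have h2L : 2/L ≤ 2 := by rw [div_le_iff₀ hL0]; nlinarith
    have he : (1 - lam*x)/L = v + 2/L := by rw [hv]; field_simp; ring
    linarith
  have hflo : ⌊v⌋ < n := Int.floor_lt.mpr h1
  have hhi : (n:ℝ) < (⌊v⌋:ℝ) + 3 := by
    have := Int.lt_floor_add_one v
    have h4 : (n:ℝ) < v + 2 := lt_of_lt_of_le h2 hupper
    linarith
  have hhi2 : n < ⌊v⌋ + 3 := by exact_mod_cast hhi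
  simp only [Finset.mem_insert, Finset.mem_singleton]
  omega

lemma slab_pow4_pointwise (hsupp : Function.support φ ⊆ Set.Ioo (-1:ℝ) 1)
    {lam ε : ℝ} (hlam : 1 ≤ lam) (hε1 : ε ≤ 1) (x : ℝ) (F : Finset ℤ)
    (hF : ∀ n : ℤ, φ (lam * x + lam ^ (1-ε) * n) ≠ 0 → n ∈ F) :
    (slab φ lam ε x)^4 ≤ 8 * (lam ^ ((1-ε)/2))^4 * ∑ n ∈ F, (φ (lam * x + lam ^ (1-ε) * n))^4 := by
  have hlam0 : (0:ℝ) < lam := lt_of_lt_of_le one_pos hlam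
  set L := lam ^ (1-ε) with hL
  set c := lam ^ ((1-ε)/2) with hc
  have hc0 : 0 < c := Real.rpow_pos_of_pos hlam0 _
  set q : ℤ → ℝ := fun n => φ (lam * x + L * n) with hq
  set n1 : ℤ := ⌊(-1 - lam*x)/L⌋ + 1 with hn1
  have h2 := two_term hsupp hlam hε1 x
  have hpair : ({⌊(-1 - lam*x)/L⌋ + 1, ⌊(-1 - lam*x)/L⌋ + 2} : Finset ℤ) = {n1, n1 + 1} := by
    rw [hn1]; congr 1 <;> ring_nf
  rw [hpair] at h2
  have hslab : slab φ lam ε x = c * (q n1 + q (n1+1)) := by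
    rw [slab_eq_sum x {n1, n1+1} h2, Finset.sum_pair (by omega)]
    ring
  set u := q n1 with hu
  set w := q (n1+1) with hw
  have hsub : u^4 + w^4 ≤ ∑ n ∈ F, (q n)^4 := by
    have e0 : ∑ n ∈ ({n1, n1+1} : Finset ℤ), (q n)^4 = u^4 + w^4 :=
      Finset.sum_pair (by omega)
    have e1 : ∑ n ∈ (({n1, n1+1} : Finset ℤ) ∩ F), (q n)^4
        = ∑ n ∈ ({n1, n1+1} : Finset ℤ), (q n)^4 := by
      apply Finset.sum_subset (Finset.inter_subset_left)
      intro y hy hy'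
      have hyF : y ∉ F := fun hyF => hy' (Finset.mem_inter.mpr ⟨hy, hyF⟩)
      have : q y = 0 := by
        by_contra hq0
        exact hyF (hF y hq0)
      rw [this]; norm_num
    have e2 : ∑ n ∈ (({n1, n1+1} : Finset ℤ) ∩ F), (q n)^4 ≤ ∑ n ∈ F, (q n)^4 := by
      apply Finset.sum_le_sum_of_subset_of_nonneg (Finset.inter_subset_right)
      intro i _ _
      positivity
    linarith [e1 ▸ e2, e0]
  calc (slab φ lam ε x)^4 = c^4 * (u + w)^4 := by rw [hslab]; ring
    _ ≤ c^4 * (8 * (u^4 + w^4)) := by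
        apply mul_le_mul_of_nonneg_left ?_ (by positivity)
        nlinarith [sq_nonneg (u - w), sq_nonneg (u + w), sq_nonneg (u^2 - w^2),
          sq_nonneg (u^2 + w^2), sq_nonneg u, sq_nonneg w]
    _ ≤ 8 * c^4 * ∑ n ∈ F, (q n)^4 := by
        rw [← mul_assoc, mul_comm (c^4) 8]
        apply mul_le_mul_of_nonneg_left hsub (by positivity)

end Slab2
end SlabAux

namespace SlabAux
section Slab3
variable {φ : ℝ → ℝ}

set_option maxHeartbeats 1000000 in
lemma slab_L4_bound (hφc : Continuous φ) (hsupp : Function.support φ ⊆ Set.Ioo (-1:ℝ) 1)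
    {lam ε : ℝ} {m : ℤ} (hlam : 1 ≤ lam) (hε0 : 0 ≤ ε) (hε1 : ε ≤ 1) (hm : lam ^ ε = (m:ℝ)) :
    ∫ x in (0:ℝ)..1, (slab φ lam ε x)^4 ≤ 48 * (∫ y : ℝ, (φ y)^4) * lam ^ (1-ε) := by
  have hlam0 : (0:ℝ) < lam := lt_of_lt_of_le one_pos hlam
  set L := lam ^ (1-ε) with hL
  set c := lam ^ ((1-ε)/2) with hc
  have hL0 : 0 < L := Real.rpow_pos_of_pos hlam0 _
  have hL1 : 1 ≤ L := by
    have h := Real.rpow_le_rpow_of_exponent_le hlam (show (0:ℝ) ≤ 1-ε by linarith)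
    rwa [Real.rpow_zero] at h
  have hm1 : (1:ℝ) ≤ (m:ℝ) := by
    rw [← hm]
    have h := Real.rpow_le_rpow_of_exponent_le hlam hε0
    rwa [Real.rpow_zero] at h
  have hLm : L * m = lam := by
    rw [hL, ← hm, ← Real.rpow_add hlam0]
    norm_num
  have hc4 : c^(4:ℕ) = L^(2:ℕ) := by
    rw [hc, hL, ← Real.rpow_natCast (lam ^ ((1-ε)/2)) 4, ← Real.rpow_natCast (lam ^ (1-ε)) 2,
      ← Real.rpow_mul hlam0.le, ← Real.rpow_mul hlam0.le]
    norm_num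
    congr 1
    ring
  set K4 := ∫ y : ℝ, (φ y)^4 with hK4
  have hφ4c : Continuous (fun y => (φ y)^4) := hφc.pow 4
  have hφ4supp : HasCompactSupport (fun y => (φ y)^4) := by
    apply HasCompactSupport.intro (isCompact_Icc (a := (-1:ℝ)) (b := 1))
    intro y hy
    have : φ y = 0 := by
      by_contra h
      exact hy (Set.mem_of_mem_of_subset (hsupp (Function.mem_support.mpr h)) Set.Ioo_subset_Icc_self)
    rw [this]; norm_num
  have hK4int : Integrable (fun y => (φ y)^4) := hφ4c.integrable_of_hasCompactSupport hφ4supp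
  have hK40 : 0 ≤ K4 := integral_nonneg (fun y => by positivity)
  -- per-n integral bound
  have hqint : ∀ n : ℤ, ∫ x in (0:ℝ)..1, (φ (lam * x + L * n))^4 ≤ lam⁻¹ * K4 := by
    intro n
    have hcomp := intervalIntegral.integral_comp_mul_add (a := (0:ℝ)) (b := 1)
      (f := fun y => (φ y)^4) hlam0.ne' (L * n)
    rw [hcomp]
    have hn0 : lam * 0 + L * n = L * (n:ℝ) := by ring
    have hn1 : lam * 1 + L * n = lam + L * (n:ℝ) := by ring
    rw [hn0, hn1, smul_eq_mul]
    have hab : L * (n:ℝ) ≤ lam + L * (n:ℝ) := by linarith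
    have hintle : ∫ y in (L * (n:ℝ))..(lam + L * (n:ℝ)), (φ y)^4 ≤ K4 := by
      rw [intervalIntegral.integral_of_le hab]
      exact setIntegral_le_integral hK4int (Filter.Eventually.of_forall (fun y => by positivity))
    apply mul_le_mul_of_nonneg_left hintle (by positivity)
  -- covering finset for [0,1]
  set A₀ : ℤ := ⌊(-1 - lam)/L⌋ with hA₀
  set B₀ : ℤ := ⌈1/L⌉ with hB₀
  set F := Finset.Icc A₀ B₀ with hF
  have hcover : ∀ x ∈ Set.Icc (0:ℝ) 1, ∀ n : ℤ, φ (lam * x + L * n) ≠ 0 → n ∈ F := by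
    intro x hx n hn
    obtain ⟨h1, h2⟩ := active_bounds hsupp hL0 hn
    obtain ⟨hx0, hx1⟩ := hx
    rw [hF, Finset.mem_Icc]
    constructor
    · have hd : (-1 - lam)/L ≤ (-1 - lam*x)/L := by
        exact (div_le_div_iff_of_pos_right hL0).mpr (by nlinarith)
      have : (A₀:ℝ) < n := lt_of_le_of_lt (le_trans (Int.floor_le _) hd) h1
      exact_mod_cast this.le
    · have hd : (1 - lam*x)/L ≤ 1/L := by
        exact (div_le_div_iff_of_pos_right hL0).mpr (by nlinarith)
      have : (n:ℝ) < (B₀:ℝ) := lt_of_lt_of_le h2 (le_trans hd (Int.le_ceil _))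
      have h5 : n < B₀ := by exact_mod_cast this
      exact h5.le
  -- cardinality bound
  have hcard : ((F.card : ℝ)) ≤ 6 * (m:ℝ) := by
    have hml : lam / L = (m:ℝ) := by
      field_simp [hL0.ne'] at hLm ⊢
      linarith [hLm]
    have hA2 : (-1 - lam)/L - 1 < (A₀:ℝ) := Int.sub_one_lt_floor _
    have hB2 : (B₀:ℝ) < 1/L + 1 := Int.ceil_lt_add_one _
    have h1L : 1/L ≤ 1 := by rw [div_le_iff₀ hL0]; linarith
    have hlamL : lam/L ≤ (m:ℝ) := le_of_eq hml
    have h2L : (-1-lam)/L = -1/L - lam/L := by field_simp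
    have hZ : (B₀:ℝ) + 1 - (A₀:ℝ) ≤ 6 * (m:ℝ) := by
      have hn1La : -1 ≤ -1/L := by rw [neg_div, neg_le_neg_iff]; exact h1L
      have hn1Lb : -1/L < 0 := by rw [neg_div]; exact neg_lt_zero.mpr (by positivity)
      nlinarith [hn1La, hn1Lb]
    have hZint : B₀ + 1 - A₀ ≤ 6 * m := by exact_mod_cast hZ
    have hcardz : (F.card : ℤ) = max (B₀ + 1 - A₀) 0 := by
      rw [hF, Int.card_Icc]
      rcases le_or_gt A₀ (B₀ + 1) with h | h
      · rw [Int.toNat_of_nonneg (by omega), max_eq_left (by omega)]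
      · rw [max_eq_right (by omega)]
        simp [Int.toNat_of_nonpos (by omega : B₀ + 1 - A₀ ≤ 0)]
    have : (F.card : ℤ) ≤ 6 * m := by
      rw [hcardz]
      have hm1' : (1:ℤ) ≤ m := by exact_mod_cast hm1
      rcases max_cases (B₀ + 1 - A₀) 0 with ⟨h, _⟩ | ⟨h, _⟩ <;> rw [h]
      · exact hZint
      · linarith
    exact_mod_cast this
  -- integrability of both sides
  have hslabc : Continuous (slab φ lam ε) := slab_continuous hφc hsupp hlam
  have hint1 : IntervalIntegrable (fun x => (slab φ lam ε x)^4) volume 0 1 :=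
    ((hslabc.pow 4)).intervalIntegrable 0 1
  have hint2 : IntervalIntegrable
      (fun x => 8 * c^4 * ∑ n ∈ F, (φ (lam * x + L * n))^4) volume 0 1 := by
    apply Continuous.intervalIntegrable
    apply Continuous.mul continuous_const
    apply continuous_finset_sum
    intro n _
    exact (hφc.comp (by fun_prop)).pow 4
  have hmono : ∫ x in (0:ℝ)..1, (slab φ lam ε x)^4
      ≤ ∫ x in (0:ℝ)..1, 8 * c^4 * ∑ n ∈ F, (φ (lam * x + L * n))^4 := by
    apply intervalIntegral.integral_mono_on (by norm_num) hint1 hint2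
    intro x hx
    exact slab_pow4_pointwise hsupp hlam hε1 x F (hcover x hx)
  have heval : ∫ x in (0:ℝ)..1, 8 * c^4 * ∑ n ∈ F, (φ (lam * x + L * n))^4
      = 8 * c^4 * ∑ n ∈ F, ∫ x in (0:ℝ)..1, (φ (lam * x + L * n))^4 := by
    rw [intervalIntegral.integral_const_mul]
    congr 1
    apply intervalIntegral.integral_finset_sum
    intro n _
    exact ((hφc.comp (by fun_prop)).pow 4).intervalIntegrable 0 1
  have hsumle : ∑ n ∈ F, ∫ x in (0:ℝ)..1, (φ (lam * x + L * n))^4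
      ≤ (F.card : ℝ) * (lam⁻¹ * K4) := by
    have := Finset.sum_le_card_nsmul F (fun n => ∫ x in (0:ℝ)..1, (φ (lam * x + L * n))^4)
      (lam⁻¹ * K4) (fun n _ => hqint n)
    simpa [nsmul_eq_mul] using this
  calc ∫ x in (0:ℝ)..1, (slab φ lam ε x)^4
      ≤ 8 * c^4 * ∑ n ∈ F, ∫ x in (0:ℝ)..1, (φ (lam * x + L * n))^4 := by
        rw [← heval]; exact hmono
    _ ≤ 8 * c^4 * ((F.card : ℝ) * (lam⁻¹ * K4)) := by
        apply mul_le_mul_of_nonneg_left hsumle (by positivity)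
    _ ≤ 8 * c^4 * ((6 * (m:ℝ)) * (lam⁻¹ * K4)) := by
        apply mul_le_mul_of_nonneg_left ?_ (by positivity)
        apply mul_le_mul_of_nonneg_right hcard (by positivity)
    _ = 48 * K4 * (L^2 * (m:ℝ) * lam⁻¹) := by rw [hc4]; push_cast; ring
    _ = 48 * K4 * L := by
        congr 1
        have : L^2 * (m:ℝ) * lam⁻¹ = L * (L * m) * lam⁻¹ := by ring
        rw [this, hLm, mul_inv_cancel_right₀ hlam0.ne']

end Slab3
end SlabAux

open SlabAux in
set_option maxHeartbeats 1000000 in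
/-- **Negative Sobolev estimate on the mean-free part of `ρ_{λ,ε}²`:**
for `s ≥ 0`, `‖P_{≠0}(ρ_{λ,ε}²)‖_{Ḣ^{-s}(𝕋)} ≤ C(s,φ) λ^{-sε} λ^{(1-ε)/2}`, where
`P_{≠0} g = g - ∫_𝕋 g` and `C(s,φ)` is independent of `λ` and `ε`. -/
theorem slab_square_meanfree_estimate
    (φ : ℝ → ℝ) (hφ : ContDiff ℝ (⊤ : ℕ∞) φ) (hodd : ∀ x : ℝ, φ (-x) = -φ x)
    (hsupp : Function.support φ ⊆ Set.Ioo (-1 : ℝ) 1)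
    (hnorm : ∫ x : ℝ, (φ x) ^ 2 = 1) :
    ∀ s : ℝ, 0 ≤ s → ∃ C : ℝ, 0 < C ∧
      ∀ lam ε : ℝ, (∃ k : ℕ, lam = 2 ^ k) → 0 < ε → ε < 1 →
        (∃ m : ℤ, lam ^ ε = (m : ℝ)) →
        negSobolevNorm s
            (fun x => (slab φ lam ε x) ^ 2 - ∫ y in (0:ℝ)..1, (slab φ lam ε y) ^ 2)
          ≤ C * lam ^ (-(s * ε)) * lam ^ ((1 - ε) / 2) := by
  intro s hs
  set K4 := ∫ y : ℝ, (φ y)^4 with hK4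
  have hK40 : 0 ≤ K4 := integral_nonneg fun y => by positivity
  refine ⟨Real.sqrt (48 * K4) + 1, by positivity, ?_⟩
  intro lam ε hpow hε0 hε1 hmex
  obtain ⟨j, hj⟩ := hpow
  obtain ⟨m, hm⟩ := hmex
  have hφc : Continuous φ := hφ.continuous
  have hlam : (1:ℝ) ≤ lam := by rw [hj]; exact one_le_pow₀ (by norm_num)
  have hlam0 : (0:ℝ) < lam := lt_of_lt_of_le one_pos hlam
  set L := lam ^ (1-ε) with hL
  have hL0 : 0 < L := Real.rpow_pos_of_pos hlam0 _
  have hm1 : (1:ℝ) ≤ (m:ℝ) := by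
    rw [← hm]
    have h := Real.rpow_le_rpow_of_exponent_le hlam hε0.le
    rwa [Real.rpow_zero] at h
  have hm0R : (0:ℝ) < m := lt_of_lt_of_le one_pos hm1
  have hm1' : (1:ℤ) ≤ m := by exact_mod_cast hm1
  set M : ℕ := m.toNat with hM
  have hMm : ((M:ℤ)) = m := Int.toNat_of_nonneg (by omega)
  have hMR : ((M:ℝ)) = (m:ℝ) := by exact_mod_cast hMm
  have hM0 : 0 < M := by omega
  have hMR0 : ((M:ℝ)) ≠ 0 := by rw [hMR]; exact hm0R.ne'
  have hslabc : Continuous (slab φ lam ε) := slab_continuous hφc hsupp hlam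
  have hLm : L * m = lam := by rw [hL, ← hm, ← Real.rpow_add hlam0]; norm_num
  have hper0 : Function.Periodic (slab φ lam ε) (L / lam) := slab_periodic hlam0.ne'
  have hLlam : L / lam = 1 / (M:ℝ) := by
    rw [hMR, eq_div_iff hm0R.ne', div_mul_eq_mul_div, hLm, div_self hlam0.ne']
  have hper : Function.Periodic (slab φ lam ε) (1/(M:ℝ)) := hLlam ▸ hper0
  set g : ℝ → ℂ := fun x => (((slab φ lam ε x)^2 : ℝ) : ℂ) with hg
  have hgc : Continuous g := Complex.continuous_ofReal.comp (hslabc.pow 2)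
  have hgper : Function.Periodic g (1/(M:ℝ)) := by
    intro x; simp only [hg]; rw [hper x]
  have hgper1 : Function.Periodic g 1 := by
    have h := hgper.nat_mul M
    rwa [mul_one_div, div_self hMR0] at h
  obtain ⟨hsumm, hpars⟩ := parseval_tsum hgc hgper1
  set cmean := ∫ y in (0:ℝ)..1, (slab φ lam ε y)^2 with hcmean
  have hcoefeq : ∀ k : ℤ, k ≠ 0 →
      fourierCoefT (fun x => ((((slab φ lam ε x)^2 - cmean : ℝ)) : ℂ)) k = fourierCoefT g k := by
    intro k hk
    rw [fourierCoefT_eq, fourierCoefT_eq]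
    have heq : ∀ x ∈ Set.uIcc (0:ℝ) 1, ((((slab φ lam ε x)^2 - cmean : ℝ)) : ℂ) * expk k x
        = g x * expk k x - (cmean:ℂ) * expk k x := by
      intro x _; simp only [hg]; push_cast; ring
    rw [intervalIntegral.integral_congr heq]
    rw [intervalIntegral.integral_sub (f := fun x => g x * expk k x) (g := fun x => (cmean:ℂ) * expk k x)
      ((hgc.mul (continuous_expk k)).intervalIntegrable 0 1)
      ((continuous_const.mul (continuous_expk k)).intervalIntegrable 0 1)]
    rw [intervalIntegral.integral_const_mul, ← fourierCoefT_eq, integral_expk_eq_zero hk]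
    simp [fourierCoefT_eq]
  set D := (m:ℝ) ^ (-(2*s)) with hD
  have hDpos : 0 < D := Real.rpow_pos_of_pos hm0R _
  have hterm : ∀ k : ℤ,
      (if k = 0 then (0:ℝ) else |(k:ℝ)| ^ (-(2*s)) *
        ‖fourierCoefT (fun x => ((((slab φ lam ε x)^2 - cmean : ℝ)) : ℂ)) k‖^2)
      ≤ D * ‖fourierCoefT g k‖^2 := by
    intro k
    rcases eq_or_ne k 0 with rfl | hk
    · rw [if_pos rfl]; positivity
    · rw [if_neg hk, hcoefeq k hk]
      rcases em ((m:ℤ) ∣ k) with hdvd | hndvd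
      · obtain ⟨t, rfl⟩ := hdvd
        have ht0 : t ≠ 0 := by rintro rfl; simp at hk
        have ht1 : (1:ℝ) ≤ |(t:ℝ)| := by
          have : (1:ℤ) ≤ |t| := Int.one_le_abs ht0
          calc (1:ℝ) ≤ ((|t|:ℤ):ℝ) := by exact_mod_cast this
            _ = |(t:ℝ)| := by push_cast; ring
        have hkm : (m:ℝ) ≤ |((m*t : ℤ):ℝ)| := by
          push_cast
          rw [abs_mul, abs_of_pos hm0R]
          nlinarith
        have hle : |((m*t : ℤ):ℝ)| ^ (-(2*s)) ≤ D :=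
          Real.rpow_le_rpow_of_nonpos hm0R hkm (by linarith)
        exact mul_le_mul_of_nonneg_right hle (by positivity)
      · have h0 : fourierCoefT g k = 0 :=
          fourierCoefT_eq_zero_of_periodic hgc hM0 hgper (by rwa [hMm])
        rw [h0]
        simp
  have hbnd_summ : Summable (fun k : ℤ => D * ‖fourierCoefT g k‖^2) := hsumm.mul_left D
  have hterm_nonneg : ∀ k : ℤ, (0:ℝ) ≤
      (if k = 0 then (0:ℝ) else |(k:ℝ)| ^ (-(2*s)) *
        ‖fourierCoefT (fun x => ((((slab φ lam ε x)^2 - cmean : ℝ)) : ℂ)) k‖^2) := by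
    intro k
    rcases eq_or_ne k 0 with rfl | hk
    · rw [if_pos rfl]
    · rw [if_neg hk]; positivity
  have hterm_summ : Summable (fun k : ℤ =>
      (if k = 0 then (0:ℝ) else |(k:ℝ)| ^ (-(2*s)) *
        ‖fourierCoefT (fun x => ((((slab φ lam ε x)^2 - cmean : ℝ)) : ℂ)) k‖^2)) :=
    Summable.of_nonneg_of_le hterm_nonneg hterm hbnd_summ
  have htsum := Summable.tsum_le_tsum hterm hterm_summ hbnd_summ
  have hgnorm : ∫ x in (0:ℝ)..1, ‖g x‖^2 = ∫ x in (0:ℝ)..1, (slab φ lam ε x)^4 := by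
    apply intervalIntegral.integral_congr
    intro x _
    show ‖(((slab φ lam ε x)^2 : ℝ) : ℂ)‖^2 = (slab φ lam ε x)^4
    rw [Complex.norm_real, Real.norm_eq_abs, ← abs_pow]
    rw [abs_of_nonneg (by positivity)]
    ring
  have hL4 := slab_L4_bound hφc hsupp hlam hε0.le hε1.le hm
  have htsumval : ∑' k : ℤ, D * ‖fourierCoefT g k‖^2 ≤ D * (48 * K4 * L) := by
    rw [tsum_mul_left, hpars, hgnorm]
    exact mul_le_mul_of_nonneg_left hL4 hDpos.le
  have hDsq : D = (lam ^ (-(s*ε)))^2 := by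
    rw [hD, ← hm, ← Real.rpow_natCast (lam ^ (-(s*ε))) 2, ← Real.rpow_mul hlam0.le,
      ← Real.rpow_mul hlam0.le]
    congr 1; push_cast; ring
  have hLsq : L = (lam ^ ((1-ε)/2))^2 := by
    rw [hL, ← Real.rpow_natCast (lam ^ ((1-ε)/2)) 2, ← Real.rpow_mul hlam0.le]
    congr 1; push_cast; ring
  have hprod : D * (48 * K4 * L) = (48*K4) * (lam ^ (-(s*ε)) * lam ^ ((1-ε)/2))^2 := by
    rw [hDsq, hLsq]; ring
  have hX0 : 0 < lam ^ (-(s*ε)) := Real.rpow_pos_of_pos hlam0 _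
  have hY0 : 0 < lam ^ ((1-ε)/2) := Real.rpow_pos_of_pos hlam0 _
  rw [negSobolevNorm]
  calc Real.sqrt (∑' k : ℤ, if k = 0 then (0:ℝ) else |(k:ℝ)| ^ (-(2*s)) *
        ‖fourierCoefT (fun x => ((((slab φ lam ε x)^2 - cmean : ℝ)) : ℂ)) k‖^2)
      ≤ Real.sqrt (D * (48 * K4 * L)) := Real.sqrt_le_sqrt (le_trans htsum htsumval)
    _ = Real.sqrt (48*K4) * (lam ^ (-(s*ε)) * lam ^ ((1-ε)/2)) := by
        rw [hprod, Real.sqrt_mul (by positivity), Real.sqrt_sq (by positivity)]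
    _ ≤ (Real.sqrt (48*K4) + 1) * lam ^ (-(s*ε)) * lam ^ ((1-ε)/2) := by
        nlinarith [Real.sqrt_nonneg (48*K4), mul_pos hX0 hY0]
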